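/- The cochain DG algebra B₁₁ with underlying graded algebra k⟨x₁,x₂⟩ (generators in degree 1) and differential ∂(x₁) = x₁² + x₂², ∂(x₂) = x₁x₂ + x₂x₁ has trivial cohomology: H⁰ = k and Hⁱ = 0 for all i ≥ 1. -/

import Mathlib

/-!
Every element of positive degree splits as `x₁ a₁ + x₂ a₂`, and the graded Leibniz rule gives
`∂(x₁ a₁ + x₂ a₂) = x₁ (a - ∂a₁) + x₂ (x₂ a₁ + x₁ a₂ - ∂a₂)` with `a = x₁ a₁ + x₂ a₂`.
Since left multiplications by distinct generators have independent images in the free algebra,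
a cocycle `a` satisfies `∂a₁ = a`.
-/

/-- The degree-`i` homogeneous component of the free algebra `k⟨x_1,...,x_n⟩`
with all generators in degree `1`: the span of the words of length `i`. -/
noncomputable def deg (k : Type*) [CommRing k] (n : ℕ) (i : ℕ) :
    Submodule k (FreeAlgebra k (Fin n)) :=
  Submodule.span k
    {w | ∃ f : Fin i → Fin n, w = (List.ofFn fun j => FreeAlgebra.ι k (f j)).prod}

theorem FreeMonoid.of_mul_eq_of_mul_iff {α : Type*} {x y : α} {w w' : FreeMonoid α} :
    of x * w = of y * w' ↔ x = y ∧ w = w' := by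
  rw [← toList.injective.eq_iff]
  simp

namespace FreeAlgebra

variable {R X : Type*} [CommSemiring R]

theorem eq_zero_of_ι_mul_add_ι_mul_eq_zero {i j : X} (hij : i ≠ j) {u v : FreeAlgebra R X}
    (h : ι R i * u + ι R j * v = 0) : u = 0 := by
  set E := equivMonoidAlgebraFreeMonoid (R := R) (X := X)
  have hE (x : X) : E (ι R x) = MonoidAlgebra.single (FreeMonoid.of x) 1 := by
    simp [E, equivMonoidAlgebraFreeMonoid]
  have hEh := congrArg E h
  rw [map_add, map_mul, map_mul, hE, hE, map_zero] at hEh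
  refine E.injective (MonoidAlgebra.ext (Finsupp.ext fun w => ?_))
  have hcoeff := congr(($hEh).coeff (FreeMonoid.of i * w))
  rw [MonoidAlgebra.coeff_add, Finsupp.add_apply,
    MonoidAlgebra.coeff_single_mul_eq_mul_coeff w fun w' _ => by simp,
    MonoidAlgebra.coeff_single_mul_of_forall_mul_ne _ _ fun w' hw' =>
      hij (FreeMonoid.of_mul_eq_of_mul_iff.mp hw').1.symm] at hcoeff
  simpa using hcoeff

end FreeAlgebra

open FreeAlgebra

section Degree

variable {k : Type*} [CommRing k] {n : ℕ}

theorem deg_zero : deg k n 0 = k ∙ 1 := by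
  simp [deg]

theorem prod_ofFn_ι_mem_deg {i : ℕ} (f : Fin i → Fin n) :
    (List.ofFn fun j => ι k (f j)).prod ∈ deg k n i :=
  Submodule.subset_span ⟨f, rfl⟩

theorem ι_mem_deg_one (j : Fin n) : ι k j ∈ deg k n 1 :=
  Submodule.subset_span ⟨fun _ => j, by simp⟩

theorem exists_eq_sum_ι_mul_of_mem_deg_succ {i : ℕ} {a : FreeAlgebra k (Fin n)}
    (ha : a ∈ deg k n (i + 1)) :
    ∃ c : Fin n → FreeAlgebra k (Fin n), (∀ j, c j ∈ deg k n i) ∧ a = ∑ j, ι k j * c j := by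
  induction ha using Submodule.span_induction with
  | mem w hw =>
    obtain ⟨f, rfl⟩ := hw
    refine ⟨Pi.single (f 0) (List.ofFn fun j : Fin i => ι k (f j.succ)).prod, fun j => ?_, ?_⟩
    · rcases eq_or_ne j (f 0) with rfl | hj
      · rw [Pi.single_eq_same]
        exact prod_ofFn_ι_mem_deg _
      · simp [hj]
    · rw [Fintype.sum_eq_single (f 0) fun j hj => by simp [hj], List.ofFn_succ, List.prod_cons,
        Pi.single_eq_same]
  | zero => exact ⟨0, fun _ => zero_mem _, by simp⟩
  | add x y _ _ hx hy =>
    obtain ⟨c, hc, rfl⟩ := hx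
    obtain ⟨c', hc', rfl⟩ := hy
    exact ⟨c + c', fun j => add_mem (hc j) (hc' j), by simp [mul_add, Finset.sum_add_distrib]⟩
  | smul r x _ hx =>
    obtain ⟨c, hc, rfl⟩ := hx
    exact ⟨r • c, fun j => Submodule.smul_mem _ r (hc j), by simp [Finset.smul_sum]⟩

end Degree

def IsGradedDerivation {k : Type*} [CommRing k] {n : ℕ}
    (d : FreeAlgebra k (Fin n) →ₗ[k] FreeAlgebra k (Fin n)) : Prop :=
  ∀ (p : ℕ) (a b : FreeAlgebra k (Fin n)), a ∈ deg k n p →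
    d (a * b) = d a * b + ((-1 : k) ^ p) • (a * d b)

namespace IsGradedDerivation

variable {k : Type*} [CommRing k] {n : ℕ} {d : FreeAlgebra k (Fin n) →ₗ[k] FreeAlgebra k (Fin n)}

theorem map_one (hd : IsGradedDerivation d) : d 1 = 0 := by
  simpa using hd 0 1 1 (by simp [deg_zero, Submodule.mem_span_singleton_self])

theorem map_eq_zero_of_mem_deg_zero (hd : IsGradedDerivation d) {a : FreeAlgebra k (Fin n)}
    (ha : a ∈ deg k n 0) : d a = 0 := by
  rw [deg_zero] at ha
  obtain ⟨c, rfl⟩ := Submodule.mem_span_singleton.mp ha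
  rw [map_smul, hd.map_one, smul_zero]

theorem map_ι_mul (hd : IsGradedDerivation d) (j : Fin n) (a : FreeAlgebra k (Fin n)) :
    d (ι k j * a) = d (ι k j) * a - ι k j * d a := by
  rw [hd 1 _ _ (ι_mem_deg_one j), pow_one, neg_one_smul, sub_eq_add_neg]

end IsGradedDerivation

theorem stmt19_general {k : Type*} [Field k]
    (d : FreeAlgebra k (Fin 2) →ₗ[k] FreeAlgebra k (Fin 2))
    (hL : ∀ (p : ℕ) (a b : FreeAlgebra k (Fin 2)), a ∈ deg k 2 p →
      d (a * b) = d a * b + ((-1 : k) ^ p) • (a * d b))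
    (h1 : d (FreeAlgebra.ι k 0) =
      FreeAlgebra.ι k 0 * FreeAlgebra.ι k 0 + FreeAlgebra.ι k 1 * FreeAlgebra.ι k 1)
    (h2 : d (FreeAlgebra.ι k 1) =
      FreeAlgebra.ι k 0 * FreeAlgebra.ι k 1 + FreeAlgebra.ι k 1 * FreeAlgebra.ι k 0) :
    (∀ a ∈ deg k 2 0, d a = 0) ∧
    (∀ i : ℕ, 1 ≤ i → ∀ a ∈ deg k 2 i, d a = 0 →
      ∃ b ∈ deg k 2 (i - 1), d b = a) := by
  have hd : IsGradedDerivation d := hL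
  refine ⟨fun a ha => hd.map_eq_zero_of_mem_deg_zero ha, ?_⟩
  rintro (_ | i) hi a ha hda
  · omega
  obtain ⟨c, hc, rfl⟩ := exists_eq_sum_ι_mul_of_mem_deg_succ ha
  rw [Fin.sum_univ_two] at hda ⊢
  have hcocycle : ι k 0 * (ι k 0 * c 0 + ι k 1 * c 1 - d (c 0)) +
      ι k 1 * (ι k 1 * c 0 + ι k 0 * c 1 - d (c 1)) = 0 := by
    rw [← hda, map_add, hd.map_ι_mul, hd.map_ι_mul, h1, h2]
    noncomm_ring
  exact ⟨c 0, hc 0,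
    (sub_eq_zero.mp (eq_zero_of_ι_mul_add_ι_mul_eq_zero zero_ne_one hcocycle)).symm⟩

/-- the cochain DG algebra `B₁₁` on `k⟨x₁,x₂⟩` with
`∂(x₁) = x₁² + x₂²`, `∂(x₂) = x₁x₂ + x₂x₁` has trivial cohomology:
`H⁰ = k` and `Hⁱ = 0` for all `i ≥ 1`. -/
theorem stmt19 {k : Type*} [Field k] [CharZero k]
    (d : FreeAlgebra k (Fin 2) →ₗ[k] FreeAlgebra k (Fin 2))
    (hL : ∀ (p : ℕ) (a b : FreeAlgebra k (Fin 2)), a ∈ deg k 2 p →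
      d (a * b) = d a * b + ((-1 : k) ^ p) • (a * d b))
    (h1 : d (FreeAlgebra.ι k 0) =
      FreeAlgebra.ι k 0 * FreeAlgebra.ι k 0 + FreeAlgebra.ι k 1 * FreeAlgebra.ι k 1)
    (h2 : d (FreeAlgebra.ι k 1) =
      FreeAlgebra.ι k 0 * FreeAlgebra.ι k 1 + FreeAlgebra.ι k 1 * FreeAlgebra.ι k 0)
    (hdd : ∀ x, d (d x) = 0) :
    (∀ a ∈ deg k 2 0, d a = 0) ∧
    (∀ i : ℕ, 1 ≤ i → ∀ a ∈ deg k 2 i, d a = 0 →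
      ∃ b ∈ deg k 2 (i - 1), d b = a) :=
  stmt19_general d hL h1 h2
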